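/- For every fixed integer k ≥ 3, lim_{N→∞} φ³_{N−1−k, k−2} / φ³_{N−3, 1} = ((2k−3)! / ((k−3)!(k−1)!)) · (3/16)^{k−1}. (Equivalently: the probability under the uniform distribution on rooted type III triangulations of the sphere with N vertices that the root vertex has degree k converges, as N → ∞, to ((2k−3)!/((k−3)!(k−1)!)) · (3/16)^{k−1}; here φ³_{N−1−k,k−2}/φ³_{N−3,1} is that probability, via the bijection between size-N sphere triangulations with root degree k and rooted triangulations of a k-gon with N−1−k internal vertices, and the count φ³_{N−3,1} of all rooted sphere triangulations with N vertices.) -/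

import Mathlib

/-!
After the shift `N = M + 3k + 3`, both counts are quotients of factorials whose arguments grow
linearly in `M`. Pairing each growing factorial of the numerator with one of the denominator
leaves three ratios `(cM + a + d)! / (cM + a)!`, each a product of `d` factors `~ cM`, so it is
`~ c ^ d M ^ d`. The powers of `M` cancel (`(k - 2) + k = 2k - 2`), and
`1 ^ (k - 2) · 3 ^ k / 4 ^ (2k - 2)` together with the constant prefactors gives the limit.
-/

/-- The number of rooted type III triangulations of a disc with m+2 boundary
vertices and n internal vertices (for m ≥ 1). -/
noncomputable def phi3 (n m : ℕ) : ℝ :=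
  (2 * Nat.factorial (2 * m + 1) * Nat.factorial (4 * n + 2 * m - 1) : ℝ) /
    (Nat.factorial (m - 1) * Nat.factorial (m + 1) * Nat.factorial n *
      Nat.factorial (3 * n + 2 * m + 1))

open Filter Finset Topology Nat

lemma tendsto_affine_div_natCast (c b : ℝ) :
    Tendsto (fun M : ℕ => (c * M + b) / M) atTop (𝓝 c) := by
  have h := (tendsto_const_div_atTop_nhds_zero_nat b).const_add c
  rw [add_zero] at h
  refine h.congr' ?_
  filter_upwards [eventually_ne_atTop 0] with M hM
  field_simp

lemma factorial_add_div_factorial (n d : ℕ) :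
    ((n + d)! : ℝ) / n ! = ∏ i ∈ range d, ((n : ℝ) + i + 1) := by
  rw [← factorial_mul_ascFactorial, ascFactorial_eq_prod_range]
  push_cast
  field_simp
  exact prod_congr rfl fun i _ => by ring

noncomputable def factorialGrowthRatio (c a d M : ℕ) : ℝ :=
  ((c * M + a + d)! : ℝ) / ((c * M + a)! * M ^ d)

lemma tendsto_factorialGrowthRatio (c a d : ℕ) :
    Tendsto (factorialGrowthRatio c a d) atTop (𝓝 ((c : ℝ) ^ d)) := by
  have h : Tendsto (fun M : ℕ => ∏ i ∈ range d, ((c : ℝ) * M + (a + i + 1)) / M) atTop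
      (𝓝 (∏ _i ∈ range d, (c : ℝ))) :=
    tendsto_finsetProd _ fun i _ => tendsto_affine_div_natCast c (a + i + 1)
  rw [prod_const, card_range] at h
  refine h.congr fun M => ?_
  rw [factorialGrowthRatio, ← div_div, factorial_add_div_factorial, prod_div_distrib,
    prod_const, card_range]
  push_cast
  exact congrArg (· / _) (prod_congr rfl fun i _ => by ring)

lemma phi3_succ (n m : ℕ) :
    phi3 n (m + 1) = 2 * (2 * m + 3)! * (4 * n + 2 * m + 1)! /
      (m ! * (m + 2)! * n ! * (3 * n + 2 * m + 3)!) := by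
  rw [phi3, show 4 * n + 2 * (m + 1) - 1 = 4 * n + 2 * m + 1 by omega]
  rfl

lemma phi3_ratio_eq (j M : ℕ) (hM : M ≠ 0) :
    phi3 (M + 2 * j + 8) (j + 1) / phi3 (M + 3 * j + 9) 1 =
      (2 * j + 3)! / ((j ! * (j + 2)! : ℝ) * 3) * factorialGrowthRatio 1 (2 * j + 8) (j + 1) M *
        factorialGrowthRatio 3 (8 * j + 27) (j + 3) M /
        factorialGrowthRatio 4 (10 * j + 33) (2 * j + 4) M := by
  rw [phi3_succ, phi3_succ (m := 0)]
  simp only [factorialGrowthRatio]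
  field_simp
  -- `ring_nf` also brings the arguments of the factorials to a common normal form.
  ring_nf

lemma tendsto_phi3_ratio (j : ℕ) :
    Tendsto (fun M => phi3 (M + 2 * j + 8) (j + 1) / phi3 (M + 3 * j + 9) 1) atTop
      (𝓝 ((2 * j + 3)! / (j ! * (j + 2)! : ℝ) * (3 / 16) ^ (j + 2))) := by
  have h := (((tendsto_factorialGrowthRatio 1 (2 * j + 8) (j + 1)).const_mul
    ((2 * j + 3)! / ((j ! * (j + 2)! : ℝ) * 3))).mul
    (tendsto_factorialGrowthRatio 3 (8 * j + 27) (j + 3))).div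
    (tendsto_factorialGrowthRatio 4 (10 * j + 33) (2 * j + 4)) (by positivity)
  convert h.congr' (eventually_ne_atTop 0 |>.mono fun M hM => (phi3_ratio_eq j M hM).symm) using 2
  rw [show 2 * j + 4 = 2 * (j + 2) by ring, pow_mul, div_pow]
  push_cast
  field_simp
  ring

theorem root_degree_limit (k : ℕ) (hk : 3 ≤ k) :
    Filter.Tendsto (fun N : ℕ => phi3 (N - 1 - k) (k - 2) / phi3 (N - 3) 1)
      Filter.atTop
      (nhds ((Nat.factorial (2 * k - 3) : ℝ) /
          (Nat.factorial (k - 3) * Nat.factorial (k - 1)) * (3 / 16) ^ (k - 1))) := by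
  obtain ⟨j, rfl⟩ : ∃ j, k = j + 3 := ⟨k - 3, by omega⟩
  rw [show 2 * (j + 3) - 3 = 2 * j + 3 by omega, show j + 3 - 3 = j by omega,
    show j + 3 - 1 = j + 2 by omega, ← tendsto_add_atTop_iff_nat (3 * j + 12)]
  convert tendsto_phi3_ratio j using 4 <;> omega
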